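/- arXiv:2402.02190 — 2 statements merged into one kernel-verified Lean document; each statement's English description precedes it below -/
import Mathlib

section
/- Let N, S be positive integers and α a positive even integer. For each s ∈ [S] let f_s : [0,1]^N → ℝ be continuous, and set F(P) = Σ_{s=1}^S f_s(P_{:s}) and R_γ(P) = F(P) + γ · Σ_{i=1}^N Σ_{s=1}^S (1 − (2 P_{is} − 1)^α) for P ∈ [0,1]^{N×S}. Let (γ_k) be a sequence of reals with γ_k → +∞ and for each k let P_k be a minimizer of R_{γ_k} over [0,1]^{N×S}. Then every limit point P* of the sequence (P_k) is a binary matrix, P* ∈ {0,1}^{N×S}, and for every s ∈ [S] the column P*_{:s} minimizes f_s over {0,1}^N. -/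
/-!
This is the convergence theorem of the exterior penalty method. Comparing a penalized minimizer
`x k` with any feasible point `z` (one where the penalty `E` vanishes) gives
`F (x k) + γ k * E (x k) ≤ F z`. As `γ k → ∞` while the other terms stay bounded, a limit point
must satisfy `E x⋆ = 0`; dropping the nonnegative penalty term gives `F x⋆ ≤ F z` in the limit.
For the entropy penalty the feasible matrices are exactly the binary ones, and since the objective
is a sum over columns, changing a single column of `x⋆` shows that each column is optimal.
-/

open Filter Topology

section Penalty

variable {X : Type*} {K : Set X} {F E : X → ℝ} {γ : ℕ → ℝ} {x : ℕ → X}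

lemma penalized_le_of_feasible
    (hmin : ∀ k, ∀ y ∈ K, F (x k) + γ k * E (x k) ≤ F y + γ k * E y)
    {z : X} (hzK : z ∈ K) (hz : E z = 0) (k : ℕ) :
    F (x k) + γ k * E (x k) ≤ F z := by
  simpa [hz] using hmin k z hzK

variable [TopologicalSpace X] {xstar : X}

lemma penalty_eq_zero_of_tendsto_penalized_minimizers (hK : IsClosed K)
    (hF : ContinuousOn F K) (hE : ContinuousOn E K) (hE0 : ∀ y ∈ K, 0 ≤ E y)
    (hγ : Tendsto γ atTop atTop) (hxK : ∀ k, x k ∈ K)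
    (hmin : ∀ k, ∀ y ∈ K, F (x k) + γ k * E (x k) ≤ F y + γ k * E y)
    (hx : Tendsto x atTop (𝓝 xstar)) {z : X} (hzK : z ∈ K) (hz : E z = 0) :
    E xstar = 0 := by
  have hxstarK : xstar ∈ K := hK.mem_of_tendsto hx (.of_forall hxK)
  have hxK' : Tendsto x atTop (𝓝[K] xstar) := tendsto_nhdsWithin_iff.2 ⟨hx, .of_forall hxK⟩
  refine (hE0 _ hxstarK).antisymm' (not_lt.1 fun hpos => ?_)
  have hblowup : Tendsto (fun k => γ k * E (x k)) atTop atTop :=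
    hγ.atTop_mul_pos hpos ((hE _ hxstarK).tendsto.comp hxK')
  have hbounded : Tendsto (fun k => F z - F (x k)) atTop (𝓝 (F z - F xstar)) :=
    tendsto_const_nhds.sub ((hF _ hxstarK).tendsto.comp hxK')
  refine not_tendsto_atTop_of_tendsto_nhds hbounded (tendsto_atTop_mono (fun k => ?_) hblowup)
  linarith [penalized_le_of_feasible hmin hzK hz k]

lemma le_of_tendsto_penalized_minimizers (hK : IsClosed K)
    (hF : ContinuousOn F K) (hE0 : ∀ y ∈ K, 0 ≤ E y)
    (hγ : Tendsto γ atTop atTop) (hxK : ∀ k, x k ∈ K)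
    (hmin : ∀ k, ∀ y ∈ K, F (x k) + γ k * E (x k) ≤ F y + γ k * E y)
    (hx : Tendsto x atTop (𝓝 xstar)) {z : X} (hzK : z ∈ K) (hz : E z = 0) :
    F xstar ≤ F z := by
  have hxstarK : xstar ∈ K := hK.mem_of_tendsto hx (.of_forall hxK)
  have hxK' : Tendsto x atTop (𝓝[K] xstar) := tendsto_nhdsWithin_iff.2 ⟨hx, .of_forall hxK⟩
  refine le_of_tendsto ((hF _ hxstarK).tendsto.comp hxK') ?_
  filter_upwards [hγ.eventually_ge_atTop 0] with k hk
  show F (x k) ≤ F z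
  nlinarith [penalized_le_of_feasible hmin hzK hz k, hE0 _ (hxK k)]

end Penalty

section Entropy

variable {α : ℕ}

lemma entropy_term_nonneg (hα : Even α) {x : ℝ} (hx : x ∈ Set.Icc (0 : ℝ) 1) :
    0 ≤ 1 - (2 * x - 1) ^ α := by
  have h : |2 * x - 1| ≤ 1 := abs_le.2 ⟨by linarith [hx.1], by linarith [hx.2]⟩
  rw [← hα.pow_abs]
  linarith [pow_le_one₀ (n := α) (abs_nonneg _) h]

lemma entropy_term_eq_zero_iff (hα0 : α ≠ 0) (hα : Even α) {x : ℝ} :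
    1 - (2 * x - 1) ^ α = 0 ↔ x = 0 ∨ x = 1 := by
  rw [sub_eq_zero, eq_comm, pow_eq_one_iff_of_ne_zero hα0]
  constructor
  · rintro (h | ⟨h, -⟩)
    · right; linarith
    · left; linarith
  · rintro (rfl | rfl) <;> norm_num [hα]

variable {ι κ : Type*}

lemma isClosed_unitCube : IsClosed {P : ι → κ → ℝ | ∀ i s, P i s ∈ Set.Icc (0 : ℝ) 1} := by
  simp only [Set.ofPred_forall]
  exact isClosed_iInter fun i => isClosed_iInter fun s => isClosed_Icc.preimage (by fun_prop)

variable [Fintype ι] [Fintype κ]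

def entropy (α : ℕ) (P : ι → κ → ℝ) : ℝ :=
  ∑ i, ∑ s, (1 - (2 * P i s - 1) ^ α)

lemma continuous_entropy : Continuous (entropy (ι := ι) (κ := κ) α) := by
  unfold entropy
  fun_prop

lemma entropy_nonneg (hα : Even α) {P : ι → κ → ℝ} (hP : ∀ i s, P i s ∈ Set.Icc (0 : ℝ) 1) :
    0 ≤ entropy α P :=
  Finset.sum_nonneg fun i _ => Finset.sum_nonneg fun s _ => entropy_term_nonneg hα (hP i s)

lemma entropy_eq_zero_iff (hα0 : α ≠ 0) (hα : Even α) {P : ι → κ → ℝ}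
    (hP : ∀ i s, P i s ∈ Set.Icc (0 : ℝ) 1) :
    entropy α P = 0 ↔ ∀ i s, P i s = 0 ∨ P i s = 1 := by
  have hrow (i : ι) : 0 ≤ ∑ s, (1 - (2 * P i s - 1) ^ α) :=
    Finset.sum_nonneg fun s _ => entropy_term_nonneg hα (hP i s)
  simp only [entropy, Finset.sum_eq_zero_iff_of_nonneg fun i _ => hrow i,
    Finset.sum_eq_zero_iff_of_nonneg fun s _ => entropy_term_nonneg hα (hP _ s),
    Finset.mem_univ, true_implies, entropy_term_eq_zero_iff hα0 hα]

end Entropy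

lemma le_of_sum_le_sum_update {κ V : Type*} [Fintype κ] [DecidableEq κ] (g : κ → V → ℝ)
    (c : κ → V) (s : κ) (y : V) (h : ∑ t, g t (c t) ≤ ∑ t, g t (Function.update c s y t)) :
    g s (c s) ≤ g s y := by
  have hdiff : ∑ t, (g t (Function.update c s y t) - g t (c t)) = g s y - g s (c s) := by
    rw [Finset.sum_eq_single s (fun t _ hts => by simp [hts]) (by simp)]
    simp
  rw [Finset.sum_sub_distrib] at hdiff
  linarith

lemma continuousOn_sum_columns {ι κ : Type*} [Fintype κ] {f : κ → (ι → ℝ) → ℝ}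
    (hf : ∀ s, ContinuousOn (f s) {p : ι → ℝ | ∀ i, p i ∈ Set.Icc (0 : ℝ) 1}) :
    ContinuousOn (fun P : ι → κ → ℝ => ∑ s, f s (fun i => P i s))
      {P | ∀ i s, P i s ∈ Set.Icc (0 : ℝ) 1} :=
  continuousOn_finsetSum _ fun s _ =>
    (hf s).comp (by fun_prop) fun _ hP i => hP i s

theorem limit_points_binary_and_columnwise_optimal_general
    (N S : ℕ) (α : ℕ) (hα : 0 < α) (hαeven : Even α)
    (f : Fin S → (Fin N → ℝ) → ℝ)
    (hf : ∀ s, ContinuousOn (f s) {p : Fin N → ℝ | ∀ i, p i ∈ Set.Icc (0 : ℝ) 1})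
    (γ : ℕ → ℝ) (hγ : Tendsto γ atTop atTop)
    (P : ℕ → Fin N → Fin S → ℝ)
    (hPmem : ∀ k, ∀ i s, P k i s ∈ Set.Icc (0 : ℝ) 1)
    (hPmin : ∀ k, ∀ Q : Fin N → Fin S → ℝ, (∀ i s, Q i s ∈ Set.Icc (0 : ℝ) 1) →
      (∑ s, f s (fun i => P k i s)) +
          γ k * ∑ i, ∑ s, (1 - (2 * P k i s - 1) ^ α) ≤
        (∑ s, f s (fun i => Q i s)) +
          γ k * ∑ i, ∑ s, (1 - (2 * Q i s - 1) ^ α))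
    (Pstar : Fin N → Fin S → ℝ)
    (hlim : ∃ φ : ℕ → ℕ, StrictMono φ ∧
      Tendsto (fun k => P (φ k)) atTop (nhds Pstar)) :
    (∀ i s, Pstar i s = 0 ∨ Pstar i s = 1) ∧
      ∀ s, ∀ y : Fin N → ℝ, (∀ i, y i = 0 ∨ y i = 1) →
        f s (fun i => Pstar i s) ≤ f s y := by
  obtain ⟨φ, hφ, hPφ⟩ := hlim
  have hγφ := hγ.comp hφ.tendsto_atTop
  have hbinary_mem {Q : Fin N → Fin S → ℝ} (hQ : ∀ i s, Q i s = 0 ∨ Q i s = 1) :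
      ∀ i s, Q i s ∈ Set.Icc (0 : ℝ) 1 := fun i s => by
    rcases hQ i s with h | h <;> simp [h]
  have hPstar_mem : ∀ i s, Pstar i s ∈ Set.Icc (0 : ℝ) 1 :=
    isClosed_unitCube.mem_of_tendsto hPφ (.of_forall fun k => hPmem (φ k))
  have hbinary : ∀ i s, Pstar i s = 0 ∨ Pstar i s = 1 :=
    (entropy_eq_zero_iff hα.ne' hαeven hPstar_mem).1 <|
      penalty_eq_zero_of_tendsto_penalized_minimizers isClosed_unitCube
        (continuousOn_sum_columns hf) continuous_entropy.continuousOn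
        (fun _ => entropy_nonneg hαeven) hγφ (fun k => hPmem (φ k)) (fun k => hPmin (φ k)) hPφ
        (z := 0) (fun _ _ => by simp) (by simp [entropy, hαeven.neg_one_pow])
  refine ⟨hbinary, fun s y hy => ?_⟩
  let Q : Fin N → Fin S → ℝ := fun i t => Function.update (fun t i => Pstar i t) s y t i
  have hQ : ∀ i t, Q i t = 0 ∨ Q i t = 1 := fun i t => by
    rcases eq_or_ne t s with rfl | ht
    · simpa [Q] using hy i
    · simpa [Q, ht] using hbinary i t
  refine le_of_sum_le_sum_update f (fun t i => Pstar i t) s y ?_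
  exact le_of_tendsto_penalized_minimizers isClosed_unitCube (continuousOn_sum_columns hf)
    (fun _ => entropy_nonneg hαeven) hγφ (fun k => hPmem (φ k)) (fun k => hPmin (φ k)) hPφ
    (hbinary_mem hQ) ((entropy_eq_zero_iff hα.ne' hαeven (hbinary_mem hQ)).2 hQ)

/-- Let `f_s : [0,1]^N → ℝ` be continuous, `R_γ(P) = Σ_s f_s(P_{:s}) + γ·S_α(P)`
with `S_α(P) = Σ_{i,s} (1 - (2 P_{is} - 1)^α)`. If `γ_k → +∞` and each `P_k`
minimizes `R_{γ_k}` over `[0,1]^{N×S}`, then every limit point `P*` of `(P_k)`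
is a binary matrix whose every column `P*_{:s}` minimizes `f_s` over `{0,1}^N`. -/
theorem limit_points_binary_and_columnwise_optimal
    (N S : ℕ) (hN : 0 < N) (hS : 0 < S) (α : ℕ) (hα : 0 < α) (hαeven : Even α)
    (f : Fin S → (Fin N → ℝ) → ℝ)
    (hf : ∀ s, ContinuousOn (f s) {p : Fin N → ℝ | ∀ i, p i ∈ Set.Icc (0 : ℝ) 1})
    (γ : ℕ → ℝ) (hγ : Tendsto γ atTop atTop)
    (P : ℕ → Fin N → Fin S → ℝ)
    (hPmem : ∀ k, ∀ i s, P k i s ∈ Set.Icc (0 : ℝ) 1)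
    (hPmin : ∀ k, ∀ Q : Fin N → Fin S → ℝ, (∀ i s, Q i s ∈ Set.Icc (0 : ℝ) 1) →
      (∑ s, f s (fun i => P k i s)) +
          γ k * ∑ i, ∑ s, (1 - (2 * P k i s - 1) ^ α) ≤
        (∑ s, f s (fun i => Q i s)) +
          γ k * ∑ i, ∑ s, (1 - (2 * Q i s - 1) ^ α))
    (Pstar : Fin N → Fin S → ℝ)
    (hlim : ∃ φ : ℕ → ℕ, StrictMono φ ∧
      Tendsto (fun k => P (φ k)) atTop (nhds Pstar)) :
    (∀ i s, Pstar i s = 0 ∨ Pstar i s = 1) ∧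
      ∀ s, ∀ y : Fin N → ℝ, (∀ i, y i = 0 ∨ y i = 1) →
        f s (fun i => Pstar i s) ≤ f s y :=
  limit_points_binary_and_columnwise_optimal_general N S α hα hαeven f hf γ hγ P hPmem hPmin Pstar
    hlim
end

section
/- Let N, S be positive integers, α a positive even integer, and let F : [0,1]^{N×S} → ℝ be continuous. Set R_γ(P) = F(P) + γ · Σ_{i=1}^N Σ_{s=1}^S (1 − (2 P_{is} − 1)^α). Let (γ_k) be a sequence of reals with γ_k → −∞ and for each k let P_k be a minimizer of R_{γ_k} over [0,1]^{N×S}. Then P_k converges (entrywise) to the matrix with all entries equal to 1/2. -/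
open Filter

/-- Let `F : [0,1]^{N×S} → ℝ` be continuous and
`R_γ(P) = F(P) + γ·Σ_{i,s} (1 - (2 P_{is} - 1)^α)`. If `γ_k → −∞` and each
`P_k` minimizes `R_{γ_k}` over `[0,1]^{N×S}`, then `P_k` converges entrywise
to the matrix with all entries `1/2`. -/
theorem minimizers_tendsto_half_of_gamma_to_neg_infty
    (N S : ℕ) (hN : 0 < N) (hS : 0 < S) (α : ℕ) (hα : 0 < α) (hαeven : Even α)
    (F : (Fin N → Fin S → ℝ) → ℝ)
    (hF : ContinuousOn F {P : Fin N → Fin S → ℝ | ∀ i s, P i s ∈ Set.Icc (0 : ℝ) 1})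
    (γ : ℕ → ℝ) (hγ : Tendsto γ atTop atBot)
    (P : ℕ → Fin N → Fin S → ℝ)
    (hPmem : ∀ k, ∀ i s, P k i s ∈ Set.Icc (0 : ℝ) 1)
    (hPmin : ∀ k, ∀ Q : Fin N → Fin S → ℝ, (∀ i s, Q i s ∈ Set.Icc (0 : ℝ) 1) →
      F (P k) + γ k * ∑ i, ∑ s, (1 - (2 * P k i s - 1) ^ α) ≤
        F Q + γ k * ∑ i, ∑ s, (1 - (2 * Q i s - 1) ^ α)) :
    ∀ i s, Tendsto (fun k => P k i s) atTop (nhds (1 / 2 : ℝ)) := by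
  set K : Set (Fin N → Fin S → ℝ) :=
    {P : Fin N → Fin S → ℝ | ∀ i s, P i s ∈ Set.Icc (0 : ℝ) 1} with hKdef
  have hKc : IsCompact K := by
    have hEq : K = Set.pi Set.univ
        (fun _ : Fin N => Set.pi Set.univ fun _ : Fin S => Set.Icc (0:ℝ) 1) := by
      ext Q; simp [hKdef, Set.mem_pi, Pi.le_def, forall_and]
    rw [hEq]
    exact isCompact_univ_pi fun _ => isCompact_univ_pi fun _ => isCompact_Icc
  obtain ⟨C, hC⟩ := hKc.exists_bound_of_continuousOn hF
  have hhalf : (fun (_ : Fin N) (_ : Fin S) => (1/2:ℝ)) ∈ K := by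
    intro i s; constructor <;> norm_num
  -- the key estimate
  have key : ∀ᶠ k in atTop, ∀ i s, (2 * P k i s - 1) ^ α ≤ (2 * C) * (-(γ k))⁻¹ := by
    filter_upwards [hγ.eventually_lt_atBot 0] with k hk
    intro i s
    have hmin := hPmin k (fun _ _ => (1/2:ℝ)) (fun i s => hhalf i s)
    have hsum : (∑ _i : Fin N, ∑ _s : Fin S, ((1:ℝ) - (2 * (1/2:ℝ) - 1) ^ α))
        = (N * S : ℝ) := by
      have : (2 * (1/2:ℝ) - 1) = 0 := by norm_num
      simp [this, zero_pow hα.ne']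
    rw [hsum] at hmin
    -- bound F values
    have hPK : P k ∈ K := fun i s => hPmem k i s
    have hFb1 : ‖F (P k)‖ ≤ C := hC _ hPK
    have hFb2 : ‖F (fun _ _ => (1/2:ℝ))‖ ≤ C := hC _ hhalf
    have hdiff : F (fun _ _ => (1/2:ℝ)) - F (P k) ≤ 2 * C := by
      have h1 : F (fun _ _ => (1/2:ℝ)) ≤ C := (abs_le.mp hFb2).2
      have h2 : -C ≤ F (P k) := (abs_le.mp hFb1).1
      linarith
    set T := ∑ i, ∑ s, ((1:ℝ) - (2 * P k i s - 1) ^ α) with hT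
    have hineq : (-(γ k)) * ((N*S : ℝ) - T) ≤ 2 * C := by nlinarith [hmin]
    have hNST : (N*S : ℝ) - T ≤ (2*C) * (-(γ k))⁻¹ := by
      rw [← le_div_iff₀' (by linarith : (0:ℝ) < -(γ k))] at hineq
      calc (N*S : ℝ) - T ≤ 2*C / (-(γ k)) := hineq
        _ = (2*C) * (-(γ k))⁻¹ := by rw [div_eq_mul_inv]
    -- single term ≤ total sum of powers = N*S - T
    have hsum2 : (N*S : ℝ) - T = ∑ i, ∑ s, (2 * P k i s - 1) ^ α := by
      simp [hT, Finset.sum_sub_distrib]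
    have hterm : (2 * P k i s - 1) ^ α ≤ (N*S : ℝ) - T := by
      rw [hsum2]
      have h1 : (2 * P k i s - 1) ^ α ≤ ∑ s', (2 * P k i s' - 1) ^ α :=
        Finset.single_le_sum (f := fun s' => (2 * P k i s' - 1) ^ α)
          (fun s' _ => hαeven.pow_nonneg _) (Finset.mem_univ s)
      have h2 : (∑ s', (2 * P k i s' - 1) ^ α) ≤ ∑ i', ∑ s', (2 * P k i' s' - 1) ^ α :=
        Finset.single_le_sum (f := fun i' => ∑ s', (2 * P k i' s' - 1) ^ α)
          (fun i' _ => Finset.sum_nonneg fun s' _ => hαeven.pow_nonneg _)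
          (Finset.mem_univ i)
      linarith
    linarith
  -- the bound tends to 0
  have hneg : Tendsto (fun k => -(γ k)) atTop atTop := tendsto_neg_atBot_atTop.comp hγ
  have hbound : Tendsto (fun k => (2*C) * (-(γ k))⁻¹) atTop (nhds 0) := by
    have := (tendsto_inv_atTop_zero.comp hneg).const_mul (2*C)
    simpa using this
  intro i s
  -- powers tend to 0
  have hpow : Tendsto (fun k => (2 * P k i s - 1) ^ α) atTop (nhds 0) := by
    apply tendsto_of_tendsto_of_tendsto_of_le_of_le' tendsto_const_nhds hbound
    · exact Eventually.of_forall fun k => hαeven.pow_nonneg _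
    · filter_upwards [key] with k hk using hk i s
  -- hence |2P-1| tends to 0
  have habs : Tendsto (fun k => |2 * P k i s - 1|) atTop (nhds 0) := by
    have hcont : ContinuousAt (fun t : ℝ => t ^ ((α:ℝ)⁻¹)) 0 :=
      Real.continuousAt_rpow_const 0 ((α:ℝ)⁻¹) (Or.inr (by positivity))
    have h0 : (0:ℝ) ^ ((α:ℝ)⁻¹) = 0 := Real.zero_rpow (by positivity)
    have hcomp := (hcont.tendsto).comp hpow
    rw [h0] at hcomp
    have heq : ∀ k, ((2 * P k i s - 1) ^ α) ^ ((α:ℝ)⁻¹) = |2 * P k i s - 1| := by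
      intro k
      have h1 : (2 * P k i s - 1) ^ α = |2 * P k i s - 1| ^ α := (hαeven.pow_abs _).symm
      rw [h1, ← Real.rpow_natCast |2 * P k i s - 1| α,
        ← Real.rpow_mul (abs_nonneg _), mul_inv_cancel₀ (by positivity : (α:ℝ) ≠ 0),
        Real.rpow_one]
    simpa only [Function.comp_def, heq] using hcomp
  have hz : Tendsto (fun k => 2 * P k i s - 1) atTop (nhds 0) := by
    rwa [tendsto_zero_iff_abs_tendsto_zero]
  have := (hz.add_const 1).div_const 2
  have heq : (fun k => (2 * P k i s - 1 + 1) / 2) = fun k => P k i s := by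
    funext k; ring
  have h12 : ((0:ℝ) + 1) / 2 = 1 / 2 := by norm_num
  rw [heq, h12] at this
  exact this
end
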